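/- arXiv:1504.00994 — 7 statements merged into one kernel-verified Lean document; each statement's English description precedes it below -/
import Mathlib

section
/- The A-algebra homomorphism ρ : A[G] → End_A(V) is surjective. -/
/-!
Over `K`, an algebraic closure of the residue field `k`, the base-changed representation is
irreducible, so by Schur's lemma its commutant consists of scalars and the Jacobson density theorem
(Burnside's theorem) shows that the `K`-span of its image is all of `End_K (K ⊗ V)`. Since `V` is
finite free, `End_K (K ⊗ V)` is the base change of `End_A V`; the span descends from `K` to `k`
by faithful flatness of `K` over `k`, and from `k` to `A` by Nakayama's lemma.
-/

open Module TensorProduct IsLocalRing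

theorem Subalgebra.eq_top_of_isSimpleModule_of_isAlgClosed {K W : Type*} [Field K]
    [IsAlgClosed K] [AddCommGroup W] [Module K W] [FiniteDimensional K W]
    (S : Subalgebra K (End K W)) [IsSimpleModule S W] : S = ⊤ := by
  have schur := IsSimpleModule.algebraMap_end_bijective_of_isAlgClosed K (A := S) (V := W)
  have : Module.Finite (End S W) W := Module.Finite.of_restrictScalars_finite K _ _
  rw [eq_top_iff]
  intro f _
  let f' : End (End S W) W :=
    { toFun := f
      map_add' := f.map_add
      map_smul' := fun φ x => by
        obtain ⟨c, rfl⟩ := schur.2 φ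
        simp }
  obtain ⟨s, hs⟩ := Module.Finite.toModuleEnd_moduleEnd_surjective f'
  convert s.2
  ext x
  exact (congr($hs x)).symm

theorem Algebra.adjoin_eq_top_of_isAlgClosed {K W : Type*} [Field K] [IsAlgClosed K]
    [AddCommGroup W] [Module K W] [FiniteDimensional K W] {s : Set (End K W)}
    (hs : ∀ p : Submodule K W, (∀ f ∈ s, ∀ x ∈ p, f x ∈ p) → p = ⊥ ∨ p = ⊤) :
    Algebra.adjoin K s = ⊤ := by
  cases subsingleton_or_nontrivial W
  · exact Subsingleton.elim _ _
  have : IsSimpleModule (Algebra.adjoin K s) W :=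
    { eq_bot_or_eq_top := fun q => by
        simpa [Submodule.restrictScalars_eq_bot_iff] using hs (q.restrictScalars K)
          fun f hf x hx => q.smul_mem (⟨f, Algebra.subset_adjoin hf⟩ : Algebra.adjoin K s) hx }
  exact (Algebra.adjoin K s).eq_top_of_isSimpleModule_of_isAlgClosed

theorem MonoidHom.span_range_eq_top_of_isAlgClosed {K W M : Type*} [Field K] [IsAlgClosed K]
    [AddCommGroup W] [Module K W] [FiniteDimensional K W] [Monoid M] (σ : M →* End K W)
    (hσ : ∀ p : Submodule K W, (∀ m, ∀ x ∈ p, σ m x ∈ p) → p = ⊥ ∨ p = ⊤) :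
    Submodule.span K (Set.range σ) = ⊤ := by
  have := Algebra.adjoin_eq_top_of_isAlgClosed (s := Set.range σ) fun p hp =>
    hσ p fun m => hp _ ⟨m, rfl⟩
  rw [← MonoidHom.coe_mrange, ← Submonoid.closure_eq (MonoidHom.mrange σ),
    ← Algebra.adjoin_eq_span, MonoidHom.coe_mrange, this, Algebra.top_toSubmodule]

theorem Module.End.isBaseChange_baseChangeHom (R S M : Type*) [CommRing R] [CommRing S]
    [Algebra R S] [AddCommGroup M] [Module R M] [Free R M] [Module.Finite R M] :
    IsBaseChange S (Module.End.baseChangeHom R S M).toLinearMap := by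
  have j := TensorProduct.isBaseChange R M S
  have : LinearMap.baseChangeHom R S M M = j.endHom := by
    ext f m
    exact (j.endHom_comp_apply f m).symm
  exact (this ▸ j.end : IsBaseChange S (LinearMap.baseChangeHom R S M M))

theorem IsBaseChange.eq_top_of_span_image_eq_top {A M M' K : Type*} [CommRing A] [IsLocalRing A]
    [AddCommGroup M] [Module A M] [Module.Finite A M] [Field K] [Algebra A K]
    [Algebra (ResidueField A) K] [IsScalarTower A (ResidueField A) K]
    [AddCommMonoid M'] [Module A M'] [Module K M'] [IsScalarTower A K M']
    {f : M →ₗ[A] M'} (hf : IsBaseChange K f) {N : Submodule A M}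
    (hN : Submodule.span K (f '' N) = ⊤) : N = ⊤ := by
  set k := ResidueField A
  have hmap : N.map (mk A k M 1) = (Submodule.span k (mk A k M 1 '' N)).restrictScalars A := by
    rw [Submodule.restrictScalars_span A k Ideal.Quotient.mk_surjective, Submodule.span_image,
      Submodule.span_eq]
  -- Nakayama reduces the claim to `k ⊗[A] M`, faithful flatness of `K` over `k` to
  -- `K ⊗[k] (k ⊗[A] M) ≃ K ⊗[A] M ≃ M'`.
  rw [← map_tensorProduct_mk_eq_top, hmap, Submodule.restrictScalars_eq_top_iff,
    ← Submodule.baseChange_inj (A := K), Submodule.baseChange_top, Submodule.baseChange_span,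
    ← Set.image_comp]
  let e : K ⊗[k] (k ⊗[A] M) ≃ₗ[K] M' :=
    AlgebraTensorModule.cancelBaseChange A k K K M ≪≫ₗ hf.equiv
  have he : e ∘ (mk k K (k ⊗[A] M) 1 ∘ mk A k M 1) = f := by
    ext m
    simp [e, IsBaseChange.equiv_tmul]
  apply Submodule.map_injective_of_injective e.injective
  rw [Submodule.map_span, ← Set.image_comp, LinearEquiv.coe_coe, he, hN, Submodule.map_top,
    LinearEquiv.range]

theorem monoidAlgebra_map_to_End_surjective_general
    {A : Type} [CommRing A] [IsLocalRing A]
    {V : Type} [AddCommGroup V] [Module A V] [Module.Free A V] [Module.Finite A V]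
    {G : Type} [Group G] (ρ : Representation A G V)
    (hirr : ∀ (K : Type) [Field K] [Algebra A K],
      (∀ a ∈ IsLocalRing.maximalIdeal A, algebraMap A K a = 0) →
      ∀ W : Submodule K (K ⊗[A] V),
        (∀ (g : G), ∀ x ∈ W, LinearMap.baseChange K (ρ g) x ∈ W) → W = ⊥ ∨ W = ⊤) :
    Function.Surjective ρ.asAlgebraHom := by
  let K := AlgebraicClosure (ResidueField A)
  let σ : G →* End K (K ⊗[A] V) := (End.baseChangeHom A K V : End A V →* _).comp ρ
  have hσ : Submodule.span K (Set.range σ) = ⊤ :=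
    σ.span_range_eq_top_of_isAlgClosed <| hirr K fun a ha => by
      simp [IsScalarTower.algebraMap_apply A (ResidueField A) K, ha]
  have hσ_sub : Set.range σ ⊆
      (End.baseChangeHom A K V).toLinearMap '' LinearMap.range ρ.asAlgebraHom.toLinearMap := by
    rintro _ ⟨g, rfl⟩
    exact ⟨ρ g, ⟨MonoidAlgebra.single g 1, ρ.asAlgebraHom_single_one g⟩, rfl⟩
  have hrange := (End.isBaseChange_baseChangeHom A K V).eq_top_of_span_image_eq_top
    (top_unique (hσ.ge.trans (Submodule.span_mono hσ_sub)))
  exact LinearMap.range_eq_top.mp hrange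

/-- with `A` a complete Noetherian local commutative ring, `V` free of rank 2
over `A`, and `ρ : G → Aut_A(V)` a representation whose residual representation is
absolutely irreducible, the induced `A`-algebra homomorphism `ρ : A[G] → End_A(V)` is
surjective. -/
theorem monoidAlgebra_map_to_End_surjective
    {A : Type} [CommRing A] [IsLocalRing A] [IsNoetherianRing A]
    [IsAdicComplete (IsLocalRing.maximalIdeal A) A]
    {V : Type} [AddCommGroup V] [Module A V] [Module.Free A V] [Module.Finite A V]
    (hrank : Module.finrank A V = 2)
    {G : Type} [Group G] (ρ : Representation A G V)
    (hirr : ∀ (K : Type) [Field K] [Algebra A K],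
      (∀ a ∈ IsLocalRing.maximalIdeal A, algebraMap A K a = 0) →
      ∀ W : Submodule K (K ⊗[A] V),
        (∀ (g : G), ∀ x ∈ W, LinearMap.baseChange K (ρ g) x ∈ W) → W = ⊥ ∨ W = ⊤) :
    Function.Surjective ρ.asAlgebraHom :=
  monoidAlgebra_map_to_End_surjective_general ρ hirr
end

section
/- For every x ∈ A[G] one has x + x* − (tr x)·1 ∈ J; consequently the ideal J is stable under the anti-involution *, i.e. J* = J. -/
open TensorProduct

/-! For `x = a·g` the element `x + x* − (tr x)·1` is `a·g⁻¹` times the defining relation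
`g² − (tr g)·g + (det g)·1` of `J`, and it depends additively on `x`. By Cayley–Hamilton in
rank 2, `ρ` kills `J`, so the trace vanishes on `J` and the relation gives `x* ≡ −x (mod J)`
for `x ∈ J`; since `*` is an involution, `J* = J`. -/

/-- The two-sided ideal `J ⊆ A[G]` generated by the elements
`g² − (tr ρ(g))·g + (det ρ(g))·1`, for `g ∈ G`. -/
noncomputable def blrIdeal {A : Type} [CommRing A]
    {V : Type} [AddCommGroup V] [Module A V] [Module.Free A V] [Module.Finite A V]
    {G : Type} [Group G] (ρ : Representation A G V) :
    TwoSidedIdeal (MonoidAlgebra A G) :=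
  TwoSidedIdeal.span
    {x : MonoidAlgebra A G | ∃ g : G,
      x = MonoidAlgebra.of A G g * MonoidAlgebra.of A G g
        - LinearMap.trace A V (ρ g) • MonoidAlgebra.of A G g
        + LinearMap.det (ρ g) • (1 : MonoidAlgebra A G)}

/-- The `A`-linear anti-involution `* : A[G] → A[G]` determined on group elements by
`g* = (det ρ(g))·g⁻¹`. -/
noncomputable def blrStar {A : Type} [CommRing A]
    {V : Type} [AddCommGroup V] [Module A V] [Module.Free A V] [Module.Finite A V]
    {G : Type} [Group G] (ρ : Representation A G V)
    (x : MonoidAlgebra A G) : MonoidAlgebra A G :=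
  Finsupp.sum x.coeff fun g a => (a * LinearMap.det (ρ g)) • MonoidAlgebra.of A G g⁻¹

open Polynomial in
theorem LinearMap.mul_self_sub_trace_smul_add_det_smul_eq_zero {A V : Type} [CommRing A]
    [AddCommGroup V] [Module A V] [Module.Free A V] [Module.Finite A V]
    (hrank : Module.finrank A V = 2) (f : V →ₗ[A] V) :
    f * f - LinearMap.trace A V f • f + LinearMap.det f • (1 : V →ₗ[A] V) = 0 := by
  have : Nontrivial A := by
    by_contra h
    rw [not_nontrivial_iff_subsingleton] at h
    have := Module.subsingleton A V
    simp at hrank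
  let b := Module.finBasisOfFinrankEq A V hrank
  have hcharpoly : f.charpoly = X ^ 2 - C (LinearMap.trace A V f) * X + C (LinearMap.det f) := by
    rw [← f.charpoly_toMatrix b, Matrix.charpoly_fin_two, LinearMap.trace_eq_matrix_trace A b,
      LinearMap.det_toMatrix]
  simpa [hcharpoly, sq, Algebra.smul_def] using f.aeval_self_charpoly

section

open MonoidAlgebra

variable {A V G : Type} [CommRing A] [AddCommGroup V] [Module A V] [Module.Free A V]
  [Module.Finite A V] [Group G] (ρ : Representation A G V)

@[simp]
theorem blrStar_zero : blrStar ρ 0 = 0 := by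
  simp [blrStar]

theorem blrStar_add (x y : MonoidAlgebra A G) :
    blrStar ρ (x + y) = blrStar ρ x + blrStar ρ y := by
  unfold blrStar
  rw [coeff_add]
  exact Finsupp.sum_add_index' (by simp) fun _ _ _ ↦ by rw [add_mul, add_smul]

theorem blrStar_single (g : G) (a : A) :
    blrStar ρ (single g a) = single g⁻¹ (a * LinearMap.det (ρ g)) := by
  simp [blrStar, of_apply]

theorem blrStar_blrStar (x : MonoidAlgebra A G) : blrStar ρ (blrStar ρ x) = x := by
  induction x using induction_linear with
  | zero => simp
  | add x y hx hy => rw [blrStar_add, blrStar_add, hx, hy]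
  | single g a =>
    rw [blrStar_single, blrStar_single, inv_inv, mul_assoc, ← map_mul, ← map_mul,
      mul_inv_cancel, map_one, map_one, mul_one]

theorem of_mul_of_sub_trace_smul_add_det_smul_mem_blrIdeal (g : G) :
    of A G g * of A G g - LinearMap.trace A V (ρ g) • of A G g
      + LinearMap.det (ρ g) • (1 : MonoidAlgebra A G) ∈ blrIdeal ρ :=
  TwoSidedIdeal.subset_span ⟨g, rfl⟩

theorem add_blrStar_sub_trace_smul_one_mem_blrIdeal (x : MonoidAlgebra A G) :
    x + blrStar ρ x - LinearMap.trace A V (ρ.asAlgebraHom x) • (1 : MonoidAlgebra A G)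
      ∈ blrIdeal ρ := by
  induction x using induction_linear with
  | zero => simp
  | add x y hx hy =>
    convert (blrIdeal ρ).add_mem hx hy using 1
    rw [blrStar_add, map_add, map_add, add_smul]
    abel
  | single g a =>
    convert (blrIdeal ρ).mul_mem_left (single g⁻¹ a) _
      (of_mul_of_sub_trace_smul_add_det_smul_mem_blrIdeal ρ g) using 1
    simp only [blrStar_single, Representation.asAlgebraHom_single, map_smul, of_apply,
      mul_add, mul_sub, single_mul_single, one_def, smul_single', smul_eq_mul,
      inv_mul_cancel_left, inv_mul_cancel, mul_one]
    abel

theorem blrIdeal_le_ker (hrank : Module.finrank A V = 2) :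
    blrIdeal ρ ≤ TwoSidedIdeal.ker ρ.asAlgebraHom := by
  rw [blrIdeal, TwoSidedIdeal.span_le]
  rintro _ ⟨g, rfl⟩
  rw [SetLike.mem_coe, TwoSidedIdeal.mem_ker]
  simpa only [map_add, map_sub, map_mul, map_smul, map_one, Representation.asAlgebraHom_of] using
    (ρ g).mul_self_sub_trace_smul_add_det_smul_eq_zero hrank

theorem blrStar_mem_blrIdeal (hrank : Module.finrank A V = 2) {x : MonoidAlgebra A G}
    (hx : x ∈ blrIdeal ρ) : blrStar ρ x ∈ blrIdeal ρ := by
  have htrace : LinearMap.trace A V (ρ.asAlgebraHom x) = 0 := by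
    rw [(TwoSidedIdeal.mem_ker _).mp (blrIdeal_le_ker ρ hrank hx), map_zero]
  simpa [htrace] using (blrIdeal ρ).sub_mem (add_blrStar_sub_trace_smul_one_mem_blrIdeal ρ x) hx

end

theorem star_relation_and_ideal_stable_general
    {A : Type} [CommRing A]
    {V : Type} [AddCommGroup V] [Module A V] [Module.Free A V] [Module.Finite A V]
    (hrank : Module.finrank A V = 2)
    {G : Type} [Group G] (ρ : Representation A G V) :
    (∀ x : MonoidAlgebra A G,
        x + blrStar ρ x
          - LinearMap.trace A V (ρ.asAlgebraHom x) • (1 : MonoidAlgebra A G) ∈ blrIdeal ρ)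
    ∧ ∀ x : MonoidAlgebra A G, x ∈ blrIdeal ρ ↔ blrStar ρ x ∈ blrIdeal ρ :=
  ⟨add_blrStar_sub_trace_smul_one_mem_blrIdeal ρ, fun x ↦
    ⟨blrStar_mem_blrIdeal ρ hrank, fun h ↦ blrStar_blrStar ρ x ▸ blrStar_mem_blrIdeal ρ hrank h⟩⟩

/-- for every `x ∈ A[G]` one has `x + x* − (tr x)·1 ∈ J`; consequently the
two-sided ideal `J` is stable under the anti-involution `*`, i.e. `J* = J`. -/
theorem star_relation_and_ideal_stable
    {A : Type} [CommRing A] [IsLocalRing A] [IsNoetherianRing A]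
    [IsAdicComplete (IsLocalRing.maximalIdeal A) A]
    {V : Type} [AddCommGroup V] [Module A V] [Module.Free A V] [Module.Finite A V]
    (hrank : Module.finrank A V = 2)
    {G : Type} [Group G] (ρ : Representation A G V)
    (hirr : ∀ (K : Type) [Field K] [Algebra A K],
      (∀ a ∈ IsLocalRing.maximalIdeal A, algebraMap A K a = 0) →
      ∀ W : Submodule K (K ⊗[A] V),
        (∀ (g : G), ∀ x ∈ W, LinearMap.baseChange K (ρ g) x ∈ W) → W = ⊥ ∨ W = ⊤) :
    (∀ x : MonoidAlgebra A G,
        x + blrStar ρ x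
          - LinearMap.trace A V (ρ.asAlgebraHom x) • (1 : MonoidAlgebra A G) ∈ blrIdeal ρ)
    ∧ ∀ x : MonoidAlgebra A G, x ∈ blrIdeal ρ ↔ blrStar ρ x ∈ blrIdeal ρ :=
  star_relation_and_ideal_stable_general hrank ρ
end

section
/- For every x ∈ A[G] one has x·x* − (det x)·1 ∈ J. -/
/-! Put `σ(x) = x + x* - tr x` and `Θ(x) = x² - (tr x) x + det x`, so that `Θ(g)` generates `J`.
Since `σ(g) = Θ(g) g⁻¹` and `σ` is linear, `σ(x) ∈ J` for all `x`. The map `Θ` is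
quadratic: `Θ(c x) = c² Θ(x)`, and in rank 2 the identity
`det (f + g) = det f + det g + tr f tr g - tr (f g)` together with `(u v)* = v* u*` expresses
`Θ(u + v) - Θ(u) - Θ(v)` through `σ(u v)`, `σ(u)` and `σ(v)`.
Hence `Θ(x) ∈ J` for all `x`, and `x x* - det x = x σ(x) - Θ(x)`. -/

open TensorProduct

theorem LinearMap.det_add_of_finrank_eq_two {A V : Type*} [CommRing A] [AddCommGroup V]
    [Module A V] [Module.Free A V] [Module.Finite A V] (hrank : Module.finrank A V = 2)
    (f g : Module.End A V) :
    LinearMap.det (f + g) = LinearMap.det f + LinearMap.det g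
      + LinearMap.trace A V f * LinearMap.trace A V g - LinearMap.trace A V (f * g) := by
  nontriviality A
  let b := Module.finBasisOfFinrankEq A V hrank
  rw [← LinearMap.det_toMatrix b, ← LinearMap.det_toMatrix b f, ← LinearMap.det_toMatrix b g,
    LinearMap.trace_eq_matrix_trace A b, LinearMap.trace_eq_matrix_trace A b,
    LinearMap.trace_eq_matrix_trace A b, map_add, LinearMap.toMatrix_mul]
  simp only [Matrix.det_fin_two, Matrix.trace_fin_two, Matrix.add_apply, Matrix.mul_apply,
    Fin.sum_univ_two]
  ring

theorem TwoSidedIdeal.algebra_smul_mem {R S : Type*} [CommSemiring R] [Ring S] [Algebra R S]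
    (I : TwoSidedIdeal S) (r : R) {x : S} (hx : x ∈ I) : r • x ∈ I := by
  rw [Algebra.smul_def]
  exact I.mul_mem_left _ _ hx

namespace Representation

open MonoidAlgebra (of)

variable {A V G : Type} [CommRing A] [AddCommGroup V] [Module A V] [Module.Free A V] [Group G]
  (ρ : Representation A G V)

noncomputable def charPolyEval (x : MonoidAlgebra A G) : MonoidAlgebra A G :=
  x * x - LinearMap.trace A V (ρ.asAlgebraHom x) • x + LinearMap.det (ρ.asAlgebraHom x) • 1

theorem charPolyEval_smul (hrank : Module.finrank A V = 2) (c : A) (u : MonoidAlgebra A G) :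
    ρ.charPolyEval (c • u) = (c * c) • ρ.charPolyEval u := by
  simp only [charPolyEval, map_smul, LinearMap.det_smul, hrank,
    smul_mul_assoc, mul_smul_comm, smul_eq_mul, smul_sub, smul_add, smul_smul]
  module

variable [Module.Finite A V]

noncomputable def blrStarAlgHom : MonoidAlgebra A G →ₐ[A] (MonoidAlgebra A G)ᵐᵒᵖ :=
  MonoidAlgebra.lift A _ G
    { toFun := fun g => MulOpposite.op (LinearMap.det (ρ g) • of A G g⁻¹)
      map_one' := by rw [inv_one, map_one, map_one, map_one, one_smul, MulOpposite.op_one]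
      map_mul' := fun g h => by
        rw [← MulOpposite.op_mul, smul_mul_smul_comm, mul_inv_rev, map_mul, map_mul,
          map_mul (of A G), mul_comm (LinearMap.det (ρ g))] }

theorem blrStar_eq_unop_blrStarAlgHom (x : MonoidAlgebra A G) :
    blrStar ρ x = (ρ.blrStarAlgHom x).unop := by
  rw [blrStarAlgHom, MonoidAlgebra.lift_apply, MulOpposite.unop_finsuppSum]
  simp [blrStar, mul_smul]

theorem blrStar_add (x y : MonoidAlgebra A G) :
    blrStar ρ (x + y) = blrStar ρ x + blrStar ρ y := by
  simp only [blrStar_eq_unop_blrStarAlgHom, map_add, MulOpposite.unop_add]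

theorem blrStar_smul (c : A) (x : MonoidAlgebra A G) :
    blrStar ρ (c • x) = c • blrStar ρ x := by
  simp only [blrStar_eq_unop_blrStarAlgHom, map_smul, MulOpposite.unop_smul]

theorem blrStar_mul (x y : MonoidAlgebra A G) :
    blrStar ρ (x * y) = blrStar ρ y * blrStar ρ x := by
  simp only [blrStar_eq_unop_blrStarAlgHom, map_mul, MulOpposite.unop_mul]

theorem blrStar_of (g : G) : blrStar ρ (of A G g) = LinearMap.det (ρ g) • of A G g⁻¹ := by
  rw [blrStar_eq_unop_blrStarAlgHom, blrStarAlgHom, MonoidAlgebra.lift_of]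
  rfl

noncomputable def traceDefect (x : MonoidAlgebra A G) : MonoidAlgebra A G :=
  x + blrStar ρ x - LinearMap.trace A V (ρ.asAlgebraHom x) • 1

theorem charPolyEval_of_mem (g : G) : ρ.charPolyEval (of A G g) ∈ blrIdeal ρ :=
  TwoSidedIdeal.subset_span ⟨g, by rw [charPolyEval, asAlgebraHom_of]⟩

theorem traceDefect_of (g : G) :
    ρ.traceDefect (of A G g) = ρ.charPolyEval (of A G g) * of A G g⁻¹ := by
  rw [traceDefect, charPolyEval, blrStar_of, asAlgebraHom_of, add_mul, sub_mul, mul_assoc,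
    ← map_mul, mul_inv_cancel, map_one, mul_one, smul_mul_assoc, smul_mul_assoc, ← map_mul,
    mul_inv_cancel, map_one, one_mul]
  abel

theorem traceDefect_mem (x : MonoidAlgebra A G) : ρ.traceDefect x ∈ blrIdeal ρ := by
  induction x using MonoidAlgebra.induction_on with
  | of g => rw [traceDefect_of]; exact (blrIdeal ρ).mul_mem_right _ _ (ρ.charPolyEval_of_mem g)
  | add u v hu hv =>
    have : ρ.traceDefect (u + v) = ρ.traceDefect u + ρ.traceDefect v := by
      simp only [traceDefect, blrStar_add, map_add, add_smul]
      abel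
    rw [this]
    exact add_mem hu hv
  | smul c u hu =>
    have : ρ.traceDefect (c • u) = c • ρ.traceDefect u := by
      simp only [traceDefect, blrStar_smul, map_smul, smul_eq_mul, smul_sub, smul_add, mul_smul]
    rw [this]
    exact (blrIdeal ρ).algebra_smul_mem c hu

/-- Rank 2 enters through the polarization of `det`; the cross term becomes a combination of
trace defects because `(u v)* = v* u*`. -/
theorem charPolyEval_add (hrank : Module.finrank A V = 2) (u v : MonoidAlgebra A G) :
    ρ.charPolyEval (u + v) = ρ.charPolyEval u + ρ.charPolyEval v + ρ.traceDefect (u * v)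
      - ρ.traceDefect v * blrStar ρ u
      - (LinearMap.trace A V (ρ.asAlgebraHom v) • 1 - v) * ρ.traceDefect u := by
  simp only [charPolyEval, traceDefect, map_add, map_mul, blrStar_mul,
    LinearMap.det_add_of_finrank_eq_two hrank, add_mul, mul_add, sub_mul, mul_sub,
    smul_mul_assoc, mul_smul_comm, one_mul,
    mul_one, add_smul, sub_smul, smul_add, smul_sub, smul_smul]
  module

theorem charPolyEval_mem (hrank : Module.finrank A V = 2) (x : MonoidAlgebra A G) :
    ρ.charPolyEval x ∈ blrIdeal ρ := by
  induction x using MonoidAlgebra.induction_on with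
  | of g => exact ρ.charPolyEval_of_mem g
  | add u v hu hv =>
    rw [charPolyEval_add ρ hrank]
    refine sub_mem (sub_mem (add_mem (add_mem hu hv) (ρ.traceDefect_mem _)) ?_) ?_
    · exact (blrIdeal ρ).mul_mem_right _ _ (ρ.traceDefect_mem v)
    · exact (blrIdeal ρ).mul_mem_left _ _ (ρ.traceDefect_mem u)
  | smul c u hu =>
    rw [charPolyEval_smul ρ hrank]
    exact (blrIdeal ρ).algebra_smul_mem _ hu

end Representation

theorem mul_star_sub_det_mem_ideal_general
    {A : Type} [CommRing A]
    {V : Type} [AddCommGroup V] [Module A V] [Module.Free A V] [Module.Finite A V]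
    (hrank : Module.finrank A V = 2)
    {G : Type} [Group G] (ρ : Representation A G V) :
    ∀ x : MonoidAlgebra A G,
      x * blrStar ρ x
        - LinearMap.det (ρ.asAlgebraHom x) • (1 : MonoidAlgebra A G) ∈ blrIdeal ρ := by
  intro x
  have hsplit : x * blrStar ρ x - LinearMap.det (ρ.asAlgebraHom x) • 1
      = x * ρ.traceDefect x - ρ.charPolyEval x := by
    simp only [Representation.traceDefect, Representation.charPolyEval, mul_add, mul_sub,
      mul_smul_comm, mul_one]
    abel
  rw [hsplit]
  exact sub_mem ((blrIdeal ρ).mul_mem_left _ _ (ρ.traceDefect_mem x))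
    (ρ.charPolyEval_mem hrank x)

/-- for every `x ∈ A[G]` one has `x·x* − (det x)·1 ∈ J`, where
`det x = det(ρ(x))`. -/
theorem mul_star_sub_det_mem_ideal
    {A : Type} [CommRing A] [IsLocalRing A] [IsNoetherianRing A]
    [IsAdicComplete (IsLocalRing.maximalIdeal A) A]
    {V : Type} [AddCommGroup V] [Module A V] [Module.Free A V] [Module.Finite A V]
    (hrank : Module.finrank A V = 2)
    {G : Type} [Group G] (ρ : Representation A G V)
    (hirr : ∀ (K : Type) [Field K] [Algebra A K],
      (∀ a ∈ IsLocalRing.maximalIdeal A, algebraMap A K a = 0) →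
      ∀ W : Submodule K (K ⊗[A] V),
        (∀ (g : G), ∀ x ∈ W, LinearMap.baseChange K (ρ g) x ∈ W) → W = ⊥ ∨ W = ⊤) :
    ∀ x : MonoidAlgebra A G,
      x * blrStar ρ x
        - LinearMap.det (ρ.asAlgebraHom x) • (1 : MonoidAlgebra A G) ∈ blrIdeal ρ :=
  mul_star_sub_det_mem_ideal_general hrank ρ
end

section
/- For x ∈ A[G], the image of x in the quotient ring R = A[G]/J is a unit if and only if det x ∈ A^× (i.e. det(ρ(x)) is a unit of A). -/
/-! By Cayley–Hamilton in rank 2, `ρ(x)² - tr ρ(x) • ρ(x) + det ρ(x) = 0` for every `x ∈ A[G]`, so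
`ρ` kills `J` and an inverse of `x` modulo `J` gives an inverse of `ρ(x)`. Conversely,
`x ↦ x² - tr x • x + det x` is a quadratic map on `A[G]` (the determinant of a `2 × 2` matrix is a
quadratic form), and its polarization lies in `J` on pairs of group elements, so it takes values in
`J` everywhere. Hence `x (tr x - x) ≡ det x` modulo `J`, and `(det x)⁻¹ (tr x - x)` inverts `x`
modulo `J` when `det x` is a unit. -/

open TensorProduct

theorem Matrix.det_add_fin_two {R : Type*} [CommRing R] (M N : Matrix (Fin 2) (Fin 2) R) :
    (M + N).det = M.det + N.det + M.trace * N.trace - (M * N).trace := by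
  simp only [det_fin_two, trace_fin_two, mul_apply, Fin.sum_univ_two, add_apply]
  ring

theorem Module.nontrivial_of_one_lt_finrank {R M : Type*} [Semiring R] [AddCommMonoid M]
    [Module R M] (h : 1 < Module.finrank R M) : Nontrivial R := by
  by_contra hR
  rw [not_nontrivial_iff_subsingleton] at hR
  exact (Module.finrank_subsingleton (R := R) (M := M) ▸ h).false

namespace LinearMap

open Polynomial

variable {R M : Type*} [CommRing R] [AddCommGroup M] [Module R M] [Module.Free R M]
  [Module.Finite R M]

theorem charpoly_of_finrank_eq_two (h : Module.finrank R M = 2) (f : M →ₗ[R] M) :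
    f.charpoly = X ^ 2 - C (trace R M f) * X + C (LinearMap.det f) := by
  have := Module.nontrivial_of_one_lt_finrank (h ▸ one_lt_two)
  let b := Module.finBasisOfFinrankEq R M h
  rw [← f.charpoly_toMatrix b, Matrix.charpoly_fin_two, ← trace_eq_matrix_trace, det_toMatrix]

theorem cayley_hamilton_of_finrank_eq_two (h : Module.finrank R M = 2) (f : M →ₗ[R] M) :
    f * f - trace R M f • f + LinearMap.det f • 1 = 0 := by
  simpa [charpoly_of_finrank_eq_two h, sq, Algebra.smul_def] using f.aeval_self_charpoly

theorem det_add_of_finrank_eq_two_s5 (h : Module.finrank R M = 2) (f g : M →ₗ[R] M) :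
    LinearMap.det (f + g) =
      LinearMap.det f + LinearMap.det g + trace R M f * trace R M g - trace R M (f * g) := by
  have := Module.nontrivial_of_one_lt_finrank (h ▸ one_lt_two)
  let b := Module.finBasisOfFinrankEq R M h
  rw [← det_toMatrix b, ← det_toMatrix b f, ← det_toMatrix b g]
  simp only [trace_eq_matrix_trace R b, map_add, toMatrix_mul]
  exact Matrix.det_add_fin_two _ _

end LinearMap

namespace Representation

open MonoidAlgebra

variable {A G V : Type*} [CommRing A] [Group G] [AddCommGroup V] [Module A V]
  (ρ : Representation A G V)

noncomputable def algebraTrace : MonoidAlgebra A G →ₗ[A] A :=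
  LinearMap.trace A V ∘ₗ ρ.asAlgebraHom.toLinearMap

noncomputable def algebraDet : MonoidAlgebra A G →* A :=
  LinearMap.det.comp ρ.asAlgebraHom.toMonoidHom

theorem algebraTrace_apply (x : MonoidAlgebra A G) :
    ρ.algebraTrace x = LinearMap.trace A V (ρ.asAlgebraHom x) := rfl

theorem algebraDet_apply (x : MonoidAlgebra A G) :
    ρ.algebraDet x = LinearMap.det (ρ.asAlgebraHom x) := rfl

@[simp]
theorem algebraTrace_of (g : G) :
    ρ.algebraTrace (of A G g) = LinearMap.trace A V (ρ g) := by
  simp [algebraTrace]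

@[simp]
theorem algebraDet_of (g : G) : ρ.algebraDet (of A G g) = LinearMap.det (ρ g) := by
  simp [algebraDet]

theorem algebraTrace_mul_comm (x y : MonoidAlgebra A G) :
    ρ.algebraTrace (x * y) = ρ.algebraTrace (y * x) := by
  simp only [algebraTrace, LinearMap.coe_comp, Function.comp_apply, AlgHom.toLinearMap_apply,
    map_mul, LinearMap.trace_mul_comm]

noncomputable def cayleyHamilton (x : MonoidAlgebra A G) : MonoidAlgebra A G :=
  x * x - ρ.algebraTrace x • x + ρ.algebraDet x • 1

noncomputable def cayleyHamiltonPolar (x y : MonoidAlgebra A G) : MonoidAlgebra A G :=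
  x * y + y * x - ρ.algebraTrace x • y - ρ.algebraTrace y • x
    + (ρ.algebraTrace x * ρ.algebraTrace y - ρ.algebraTrace (x * y)) • 1

theorem cayleyHamiltonPolar_comm (x y : MonoidAlgebra A G) :
    ρ.cayleyHamiltonPolar x y = ρ.cayleyHamiltonPolar y x := by
  rw [cayleyHamiltonPolar, cayleyHamiltonPolar, algebraTrace_mul_comm]
  module

theorem cayleyHamiltonPolar_add_right (x y z : MonoidAlgebra A G) :
    ρ.cayleyHamiltonPolar x (y + z) = ρ.cayleyHamiltonPolar x y + ρ.cayleyHamiltonPolar x z := by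
  simp only [cayleyHamiltonPolar, mul_add, add_mul, map_add]
  module

theorem cayleyHamiltonPolar_smul_right (a : A) (x y : MonoidAlgebra A G) :
    ρ.cayleyHamiltonPolar x (a • y) = a • ρ.cayleyHamiltonPolar x y := by
  simp only [cayleyHamiltonPolar, mul_smul_comm, smul_mul_assoc, map_smul, smul_eq_mul]
  module

/- With the adjugate `x^adj = tr x • 1 - x`, the left side is `h^adj * g^adj - (g * h)^adj`;
modulo `blrIdeal ρ` the adjugate of a group element `g` is `det g • g⁻¹`, which is multiplicative. -/
theorem cayleyHamiltonPolar_of_of (g h : G) :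
    ρ.cayleyHamiltonPolar (of A G g) (of A G h) =
      of A G g⁻¹ * ρ.cayleyHamilton (of A G (g * h)) * of A G h⁻¹
        - LinearMap.det (ρ g) • (of A G g⁻¹ * ρ.cayleyHamilton (of A G h) * of A G h⁻¹)
        - LinearMap.trace A V (ρ h) • (ρ.cayleyHamilton (of A G g) * of A G g⁻¹)
        + ρ.cayleyHamilton (of A G g) * of A G g⁻¹ * of A G h := by
  simp only [cayleyHamiltonPolar, cayleyHamilton, ← map_mul (of A G), algebraTrace_of,
    algebraDet_of, map_mul ρ, map_mul LinearMap.det]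
  simp only [sub_mul, add_mul, mul_sub, mul_add, smul_mul_assoc, mul_smul_comm, mul_one, one_mul,
    ← map_mul (of A G), mul_assoc, mul_inv_cancel, inv_mul_cancel_left, map_one]
  module

theorem mul_trace_smul_one_sub (x : MonoidAlgebra A G) :
    x * (ρ.algebraTrace x • 1 - x) = ρ.algebraDet x • 1 - ρ.cayleyHamilton x := by
  rw [cayleyHamilton, mul_sub, mul_smul_comm, mul_one]
  abel

theorem trace_smul_one_sub_mul (x : MonoidAlgebra A G) :
    (ρ.algebraTrace x • 1 - x) * x = ρ.algebraDet x • 1 - ρ.cayleyHamilton x := by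
  rw [cayleyHamilton, sub_mul, smul_mul_assoc, one_mul]
  abel

variable [Module.Free A V]

theorem algebraDet_smul (h : Module.finrank A V = 2) (a : A) (x : MonoidAlgebra A G) :
    ρ.algebraDet (a • x) = a ^ 2 * ρ.algebraDet x := by
  simp [algebraDet, h]

theorem cayleyHamilton_smul (h : Module.finrank A V = 2) (a : A) (x : MonoidAlgebra A G) :
    ρ.cayleyHamilton (a • x) = a ^ 2 • ρ.cayleyHamilton x := by
  simp only [cayleyHamilton, algebraDet_smul ρ h, map_smul, smul_mul_assoc, mul_smul_comm,
    smul_eq_mul]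
  module

variable [Module.Finite A V]

theorem algebraDet_add (h : Module.finrank A V = 2) (x y : MonoidAlgebra A G) :
    ρ.algebraDet (x + y) = ρ.algebraDet x + ρ.algebraDet y
      + ρ.algebraTrace x * ρ.algebraTrace y - ρ.algebraTrace (x * y) := by
  simp only [algebraDet_apply, algebraTrace_apply, map_add, map_mul]
  exact LinearMap.det_add_of_finrank_eq_two_s5 h _ _

theorem cayleyHamilton_add (h : Module.finrank A V = 2) (x y : MonoidAlgebra A G) :
    ρ.cayleyHamilton (x + y) =
      ρ.cayleyHamilton x + ρ.cayleyHamilton y + ρ.cayleyHamiltonPolar x y := by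
  simp only [cayleyHamilton, cayleyHamiltonPolar, algebraDet_add ρ h, map_add, mul_add, add_mul]
  module

theorem asAlgebraHom_cayleyHamilton (h : Module.finrank A V = 2) (x : MonoidAlgebra A G) :
    ρ.asAlgebraHom (ρ.cayleyHamilton x) = 0 := by
  simpa [cayleyHamilton, algebraTrace, algebraDet] using
    LinearMap.cayley_hamilton_of_finrank_eq_two h (ρ.asAlgebraHom x)

end Representation

theorem TwoSidedIdeal.smul_mem {R B : Type*} [CommSemiring R] [Ring B] [Algebra R B]
    (I : TwoSidedIdeal B) (r : R) {x : B} (hx : x ∈ I) : r • x ∈ I := by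
  rw [Algebra.smul_def]
  exact I.mul_mem_left _ _ hx

namespace Representation

open MonoidAlgebra

variable {A G V : Type} [CommRing A] [Group G] [AddCommGroup V] [Module A V] [Module.Free A V]
  [Module.Finite A V] (ρ : Representation A G V)

theorem cayleyHamilton_of_mem_blrIdeal (g : G) : ρ.cayleyHamilton (of A G g) ∈ blrIdeal ρ :=
  TwoSidedIdeal.subset_span ⟨g, by rw [cayleyHamilton, algebraTrace_of, algebraDet_of]⟩

theorem cayleyHamiltonPolar_of_of_mem_blrIdeal (g h : G) :
    ρ.cayleyHamiltonPolar (of A G g) (of A G h) ∈ blrIdeal ρ := by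
  have := ρ.cayleyHamilton_of_mem_blrIdeal
  rw [cayleyHamiltonPolar_of_of]
  refine add_mem (sub_mem (sub_mem ?_ ?_) ?_) ?_
  · exact (blrIdeal ρ).mul_mem_right _ _ ((blrIdeal ρ).mul_mem_left _ _ (this _))
  · exact (blrIdeal ρ).smul_mem _
      ((blrIdeal ρ).mul_mem_right _ _ ((blrIdeal ρ).mul_mem_left _ _ (this _)))
  · exact (blrIdeal ρ).smul_mem _ ((blrIdeal ρ).mul_mem_right _ _ (this _))
  · exact (blrIdeal ρ).mul_mem_right _ _ ((blrIdeal ρ).mul_mem_right _ _ (this _))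

theorem cayleyHamiltonPolar_mem_blrIdeal (x y : MonoidAlgebra A G) :
    ρ.cayleyHamiltonPolar x y ∈ blrIdeal ρ := by
  induction x using MonoidAlgebra.induction_on generalizing y with
  | of g =>
    induction y using MonoidAlgebra.induction_on with
    | of h => exact ρ.cayleyHamiltonPolar_of_of_mem_blrIdeal g h
    | add y z hy hz => rw [cayleyHamiltonPolar_add_right]; exact add_mem hy hz
    | smul a y hy => rw [cayleyHamiltonPolar_smul_right]; exact (blrIdeal ρ).smul_mem a hy
  | add x z hx hz =>
    rw [cayleyHamiltonPolar_comm, cayleyHamiltonPolar_add_right, cayleyHamiltonPolar_comm,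
      cayleyHamiltonPolar_comm ρ y]
    exact add_mem (hx y) (hz y)
  | smul a x hx =>
    rw [cayleyHamiltonPolar_comm, cayleyHamiltonPolar_smul_right, cayleyHamiltonPolar_comm]
    exact (blrIdeal ρ).smul_mem a (hx y)

theorem cayleyHamilton_mem_blrIdeal (h : Module.finrank A V = 2) (x : MonoidAlgebra A G) :
    ρ.cayleyHamilton x ∈ blrIdeal ρ := by
  induction x using MonoidAlgebra.induction_on with
  | of g => exact ρ.cayleyHamilton_of_mem_blrIdeal g
  | add x y hx hy =>
    rw [cayleyHamilton_add ρ h]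
    exact add_mem (add_mem hx hy) (ρ.cayleyHamiltonPolar_mem_blrIdeal x y)
  | smul a x hx => rw [cayleyHamilton_smul ρ h]; exact (blrIdeal ρ).smul_mem _ hx

theorem blrIdeal_le_ker (h : Module.finrank A V = 2) :
    blrIdeal ρ ≤ TwoSidedIdeal.ker ρ.asAlgebraHom := by
  refine TwoSidedIdeal.span_le.mpr ?_
  rintro _ ⟨g, rfl⟩
  have := ρ.asAlgebraHom_cayleyHamilton h (of A G g)
  rwa [cayleyHamilton, algebraTrace_of, algebraDet_of] at this

end Representation

theorem isUnit_mod_ideal_iff_det_isUnit_general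
    {A : Type} [CommRing A]
    {V : Type} [AddCommGroup V] [Module A V] [Module.Free A V] [Module.Finite A V]
    (hrank : Module.finrank A V = 2)
    {G : Type} [Group G] (ρ : Representation A G V)
    (x : MonoidAlgebra A G) :
    (∃ y : MonoidAlgebra A G, x * y - 1 ∈ blrIdeal ρ ∧ y * x - 1 ∈ blrIdeal ρ)
      ↔ IsUnit (LinearMap.det (ρ.asAlgebraHom x)) := by
  constructor
  · rintro ⟨y, hxy, hyx⟩
    have hρ {a b : MonoidAlgebra A G} (hab : a * b - 1 ∈ blrIdeal ρ) :
        ρ.asAlgebraHom a * ρ.asAlgebraHom b = 1 := by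
      simpa [sub_eq_zero] using (TwoSidedIdeal.mem_ker _).mp (ρ.blrIdeal_le_ker hrank hab)
    exact IsUnit.map LinearMap.det ⟨⟨_, _, hρ hxy, hρ hyx⟩, rfl⟩
  · intro hdet
    obtain ⟨u, hu⟩ := hdet
    have hinv : (↑u⁻¹ : A) • ρ.algebraDet x • (1 : MonoidAlgebra A G) = 1 := by
      rw [smul_smul, ρ.algebraDet_apply, ← hu, Units.inv_mul, one_smul]
    have hmem : -((↑u⁻¹ : A) • ρ.cayleyHamilton x) ∈ blrIdeal ρ :=
      neg_mem ((blrIdeal ρ).smul_mem _ (ρ.cayleyHamilton_mem_blrIdeal hrank x))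
    refine ⟨(↑u⁻¹ : A) • (ρ.algebraTrace x • 1 - x), ?_, ?_⟩
    · rwa [mul_smul_comm, ρ.mul_trace_smul_one_sub, smul_sub, hinv, sub_sub_cancel_left]
    · rwa [smul_mul_assoc, ρ.trace_smul_one_sub_mul, smul_sub, hinv, sub_sub_cancel_left]

/-- for `x ∈ A[G]`, the image of `x` in the quotient ring `R = A[G]/J`
is a unit (i.e. `x` is invertible modulo `J`) if and only if `det(ρ(x)) ∈ A^×`. -/
theorem isUnit_mod_ideal_iff_det_isUnit
    {A : Type} [CommRing A] [IsLocalRing A] [IsNoetherianRing A]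
    [IsAdicComplete (IsLocalRing.maximalIdeal A) A]
    {V : Type} [AddCommGroup V] [Module A V] [Module.Free A V] [Module.Finite A V]
    (hrank : Module.finrank A V = 2)
    {G : Type} [Group G] (ρ : Representation A G V)
    (hirr : ∀ (K : Type) [Field K] [Algebra A K],
      (∀ a ∈ IsLocalRing.maximalIdeal A, algebraMap A K a = 0) →
      ∀ W : Submodule K (K ⊗[A] V),
        (∀ (g : G), ∀ x ∈ W, LinearMap.baseChange K (ρ g) x ∈ W) → W = ⊥ ∨ W = ⊤)
    (x : MonoidAlgebra A G) :
    (∃ y : MonoidAlgebra A G, x * y - 1 ∈ blrIdeal ρ ∧ y * x - 1 ∈ blrIdeal ρ)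
      ↔ IsUnit (LinearMap.det (ρ.asAlgebraHom x)) :=
  isUnit_mod_ideal_iff_det_isUnit_general hrank ρ x
end

section
/- Every two-sided ideal I of End_A(V) which contains all commutators e∘f − f∘e, for e, f ∈ End_A(V), is equal to End_A(V); in particular id_V ∈ I. -/
/-!
In a matrix ring, an off-diagonal matrix unit `E i j` is the commutator `[E i i, E i j]`, so
every diagonal unit `E i i = E i j * E j i` lies in any two-sided ideal containing the
commutators, and these units sum to `1`. A basis of size two identifies `End_A(V)` with `2 × 2` matrices.
-/

namespace Matrix

variable {n R : Type*} [Fintype n] [DecidableEq n] [Ring R]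

theorem single_mem_of_commutators_mem {I : TwoSidedIdeal (Matrix n n R)}
    (hI : ∀ x y : Matrix n n R, x * y - y * x ∈ I) {i j : n} (hij : i ≠ j) :
    single i j (1 : R) ∈ I := by
  simpa [hij.symm] using hI (single i i 1) (single i j 1)

theorem twoSidedIdeal_eq_top_of_commutators_mem [Nontrivial n] (I : TwoSidedIdeal (Matrix n n R))
    (hI : ∀ x y : Matrix n n R, x * y - y * x ∈ I) : I = ⊤ := by
  have hdiag (i : n) : single i i (1 : R) ∈ I := by
    obtain ⟨j, hji⟩ := exists_ne i
    simpa using I.mul_mem_right _ (single j i 1) (single_mem_of_commutators_mem hI hji.symm)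
  have hsum : ∑ i : n, single i i (1 : R) ∈ I := sum_mem fun i _ => hdiag i
  exact I.eq_top (sum_single_one (α := R) (m := n) ▸ hsum)

end Matrix

theorem RingEquiv.twoSidedIdeal_eq_top_of_commutators_mem {R S : Type*} [Ring R] [Ring S]
    (e : R ≃+* S)
    (hS : ∀ J : TwoSidedIdeal S, (∀ x y : S, x * y - y * x ∈ J) → J = ⊤)
    (I : TwoSidedIdeal R) (hI : ∀ x y : R, x * y - y * x ∈ I) : I = ⊤ := by
  have hJ : TwoSidedIdeal.comap e.symm I = ⊤ :=
    hS _ fun x y => by simpa [TwoSidedIdeal.mem_comap] using hI (e.symm x) (e.symm y)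
  have hone : (1 : S) ∈ TwoSidedIdeal.comap e.symm I := hJ ▸ TwoSidedIdeal.one_mem _ rfl
  exact I.eq_top (by simpa [TwoSidedIdeal.mem_comap] using hone)

theorem Module.End.twoSidedIdeal_eq_top_of_commutators_mem {ι A V : Type*} [Fintype ι]
    [DecidableEq ι] [Nontrivial ι] [CommRing A] [AddCommGroup V] [Module A V]
    (b : Module.Basis ι A V) (I : TwoSidedIdeal (Module.End A V))
    (hI : ∀ e f : Module.End A V, e * f - f * e ∈ I) : I = ⊤ :=
  (LinearMap.toMatrixAlgEquiv b).toRingEquiv.twoSidedIdeal_eq_top_of_commutators_mem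
    Matrix.twoSidedIdeal_eq_top_of_commutators_mem I hI

theorem every_twoSidedIdeal_containing_commutators_eq_top_general
    {A : Type} [CommRing A]
    {V : Type} [AddCommGroup V] [Module A V] [Module.Free A V] [Module.Finite A V]
    (hrank : Module.finrank A V = 2)
    (I : TwoSidedIdeal (Module.End A V))
    (hI : ∀ e f : Module.End A V, e * f - f * e ∈ I) :
    I = ⊤ ∧ (1 : Module.End A V) ∈ I := by
  -- `finrank` over the zero ring is `1`, so `hrank` rules it out.
  have : Nontrivial A := not_subsingleton_iff_nontrivial.mp fun _ => by
    simp [Module.finrank_subsingleton] at hrank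
  have hI_top : I = ⊤ :=
    Module.End.twoSidedIdeal_eq_top_of_commutators_mem (Module.finBasisOfFinrankEq A V hrank) I hI
  exact ⟨hI_top, I.one_mem hI_top⟩

/-- Let `A` be a local commutative ring and `V` a free `A`-module of rank 2.
Every two-sided ideal `I` of `End_A(V)` which contains all commutators `e ∘ f - f ∘ e`
is equal to `End_A(V)`; in particular `id_V ∈ I`. -/
theorem every_twoSidedIdeal_containing_commutators_eq_top
    {A : Type} [CommRing A] [IsLocalRing A]
    {V : Type} [AddCommGroup V] [Module A V] [Module.Free A V] [Module.Finite A V]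
    (hrank : Module.finrank A V = 2)
    (I : TwoSidedIdeal (Module.End A V))
    (hI : ∀ e f : Module.End A V, e * f - f * e ∈ I) :
    I = ⊤ ∧ (1 : Module.End A V) ∈ I :=
  every_twoSidedIdeal_containing_commutators_eq_top_general hrank I hI
end

section
/- Let β : Γ → kˣ be a homomorphism. Then k'(α) is isomorphic, as an 𝔽_p[Γ]-module, to an 𝔽_p[Γ]-submodule of k(β) if and only if there exists a field automorphism F of k such that β(γ) = F(α(γ)) for all γ ∈ Γ. -/
/-!
An additive embedding `f : k' → k` intertwining `α` with `β` is, up to the scalar `f 1`, a ring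
homomorphism: the `a ∈ k'` for which multiplication by `a` is carried by `f` to multiplication by
some scalar form a subfield, which contains the values of `α` and hence is all of `k'`. So
`x ↦ f x / f 1` is an embedding `k' → k` sending `α` to `β`, and any embedding of a subfield of a
finite field extends to an automorphism, since finite extensions of finite fields are normal.
-/

theorem Subfield.closure_preimage_subtype_eq_top {k : Type*} [Field k] (s : Set k) :
    closure ((closure s).subtype ⁻¹' s) = ⊤ :=
  eq_top_iff.2 fun x _ ↦ Subtype.recOn x fun _ hx ↦
    closure_induction (fun _ h ↦ subset_closure h) (one_mem _) (fun _ _ _ _ ↦ add_mem)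
      (fun _ _ ↦ neg_mem) (fun _ _ ↦ inv_mem) (fun _ _ _ _ ↦ mul_mem) hx

namespace AddMonoidHom

variable {K L : Type*} [Field K] [Field L] (f : K →+ L)

def multiplierSubfield : Subfield K where
  carrier := {a | ∃ b, ∀ y, f (a * y) = b * f y}
  zero_mem' := ⟨0, by simp⟩
  one_mem' := ⟨1, by simp⟩
  add_mem' := by
    rintro a a' ⟨b, hb⟩ ⟨b', hb'⟩
    exact ⟨b + b', fun y ↦ by rw [add_mul, map_add, hb, hb', add_mul]⟩
  neg_mem' := by
    rintro a ⟨b, hb⟩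
    exact ⟨-b, fun y ↦ by rw [neg_mul, map_neg, hb, neg_mul]⟩
  mul_mem' := by
    rintro a a' ⟨b, hb⟩ ⟨b', hb'⟩
    exact ⟨b * b', fun y ↦ by rw [mul_assoc, hb, hb', mul_assoc]⟩
  inv_mem' := by
    rintro a ⟨b, hb⟩
    by_cases ha : a = 0
    · exact ⟨0, by simp [ha]⟩
    refine ⟨b⁻¹, fun y ↦ ?_⟩
    have hf (w : K) : f w = b * f (a⁻¹ * w) := by rw [← hb, mul_inv_cancel_left₀ ha]
    rcases eq_or_ne b 0 with rfl | hb0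
    · simp [hf (a⁻¹ * y)]
    · rw [hf y, inv_mul_cancel_left₀ hb0]

theorem exists_ringHom_of_multiplierSubfield_eq_top (h1 : f 1 ≠ 0)
    (htop : f.multiplierSubfield = ⊤) : ∃ g : K →+* L, ∀ x, f x = g x * f 1 := by
  have hmul (a y : K) : f (a * y) = f a / f 1 * f y := by
    obtain ⟨b, hb⟩ : a ∈ f.multiplierSubfield := htop ▸ Subfield.mem_top a
    have hb1 := hb 1
    rw [mul_one] at hb1
    rw [hb, hb1, mul_div_cancel_right₀ b h1]
  refine ⟨{ toFun := fun a ↦ f a / f 1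
            map_one' := div_self h1
            map_mul' := fun a y ↦ by rw [hmul, mul_div_assoc]
            map_zero' := by simp
            map_add' := fun a y ↦ by rw [map_add, add_div] }, fun x ↦ ?_⟩
  exact (div_mul_cancel₀ (f x) h1).symm

end AddMonoidHom

theorem FiniteField.exists_ringEquiv_comp_eq {K k : Type*} [Field K] [Field k] [Finite k]
    (i g : K →+* k) : ∃ F : k ≃+* k, (F : k →+* k).comp i = g := by
  obtain ⟨p, _⟩ := CharP.exists k
  have : Fact p.Prime := ⟨CharP.char_is_prime k p⟩
  have : CharP K p := i.charP i.injective p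
  let := ZMod.algebra k p
  let := ZMod.algebra K p
  let := i.toAlgebra
  have : IsScalarTower (ZMod p) K k := .of_algebraMap_eq' (Subsingleton.elim _ _)
  let gₐ : K →ₐ[ZMod p] k :=
    { g with commutes' := RingHom.congr_fun (RingHom.ext_zmod (g.comp (algebraMap _ K)) _) }
  exact ⟨(AlgEquiv.ofBijective (gₐ.liftNormal k) (AlgHom.normal_bijective _ _ _ _)).toRingEquiv,
    RingHom.ext (gₐ.liftNormal_commutes k)⟩

theorem character_module_embeds_iff_twist_by_automorphism_general
    {k : Type} [Field k] [Fintype k]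
    {Γ : Type} [Group Γ] (α β : Γ →* kˣ) :
    (∃ f : (Subfield.closure (Set.range fun γ => ((α γ : kˣ) : k))) →+ k,
        Function.Injective f ∧
        ∀ (γ : Γ) (x : Subfield.closure (Set.range fun γ => ((α γ : kˣ) : k))),
          f ⟨((α γ : kˣ) : k) * (x : k),
              mul_mem (Subfield.subset_closure ⟨γ, rfl⟩) x.2⟩
            = ((β γ : kˣ) : k) * f x)
    ↔ ∃ F : k ≃+* k, ∀ γ : Γ, ((β γ : kˣ) : k) = F ((α γ : kˣ) : k) := by
  set K := Subfield.closure (Set.range fun γ => ((α γ : kˣ) : k))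
  constructor
  · rintro ⟨f, hinj, hf⟩
    have htop : f.multiplierSubfield = ⊤ := by
      rw [eq_top_iff, ← Subfield.closure_preimage_subtype_eq_top, Subfield.closure_le]
      rintro ⟨_, _⟩ ⟨γ, rfl⟩
      exact ⟨β γ, hf γ⟩
    have hf1 : f 1 ≠ 0 := hinj.ne one_ne_zero |>.trans_eq (map_zero f)
    obtain ⟨g, hg⟩ := f.exists_ringHom_of_multiplierSubfield_eq_top hf1 htop
    obtain ⟨F, hF⟩ := FiniteField.exists_ringEquiv_comp_eq K.subtype g
    refine ⟨F, fun γ ↦ ?_⟩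
    have hαγ : (α γ : k) ∈ K := Subfield.subset_closure ⟨γ, rfl⟩
    have hgαγ : g ⟨_, hαγ⟩ * f 1 = β γ * f 1 := by
      rw [← hg, ← hf γ 1]
      simp only [OneMemClass.coe_one, mul_one]
    exact (mul_right_cancel₀ hf1 hgαγ).symm.trans (RingHom.congr_fun hF _).symm
  · rintro ⟨F, hF⟩
    refine ⟨(F : k →+ k).comp (K.subtype : K →+ k), F.injective.comp Subtype.val_injective,
      fun γ x ↦ ?_⟩
    simp [hF]

/-- let `k` be a finite field of characteristic `p`, `Γ` a group,
`α, β : Γ → kˣ` homomorphisms, and let `k'` be the subfield of `k` generated by the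
values of `α`.  Then `k'(α)` is isomorphic, as an `𝔽_p[Γ]`-module, to an
`𝔽_p[Γ]`-submodule of `k(β)` (i.e. there is an injective additive — equivalently
`𝔽_p`-linear — map `k' → k` intertwining multiplication by `α(γ)` with multiplication by
`β(γ)`) if and only if there is a field automorphism `F` of `k` with `β = F ∘ α`. -/
theorem character_module_embeds_iff_twist_by_automorphism
    {p : ℕ} (hp : p.Prime) {k : Type} [Field k] [Fintype k] [CharP k p]
    {Γ : Type} [Group Γ] (α β : Γ →* kˣ) :
    (∃ f : (Subfield.closure (Set.range fun γ => ((α γ : kˣ) : k))) →+ k,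
        Function.Injective f ∧
        ∀ (γ : Γ) (x : Subfield.closure (Set.range fun γ => ((α γ : kˣ) : k))),
          f ⟨((α γ : kˣ) : k) * (x : k),
              mul_mem (Subfield.subset_closure ⟨γ, rfl⟩) x.2⟩
            = ((β γ : kˣ) : k) * f x)
    ↔ ∃ F : k ≃+* k, ∀ γ : Γ, ((β γ : kˣ) : k) = F ((α γ : kˣ) : k) :=
  character_module_embeds_iff_twist_by_automorphism_general α β
end

section
/- The first group cohomology H¹(Gal(F(ζ_{p^N})/F), k(δ·ε̄)) vanishes. -/
/-!
The Galois group of `F(ζ_{p^N})/F` is abelian, and for an abelian group a 1-cocycle `f` for a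
character `χ` is a coboundary as soon as `χ g₀ ≠ 1` for one `g₀`: expanding
`f (g₀ * g) = f (g * g₀)` gives `f g * (χ g₀ - 1) = f g₀ * (χ g - 1)`.
Such a `g₀` exists for `χ = δ * ε̄`: the action on `ζ_p` embeds `Gal(F(ζ_p)/F)` into `(ℤ/p)ˣ`,
and a subgroup of order divisible by `4` of the units of a field is not contained in `{±1}`,
so `ε̄ g₀ ^ 2 ≠ 1` for some `g₀`, while `δ g₀ ^ 2 = 1`.
-/

open IntermediateField

theorem exists_eq_mul_sub_of_commute_of_ne_one {G k : Type*} [Mul G] [Field k]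
    (χ f : G → k) (hf : ∀ g h, f (g * h) = f g + χ g * f h) {g₀ : G}
    (hcomm : ∀ g, Commute g₀ g) (hg₀ : χ g₀ ≠ 1) :
    ∃ x : k, ∀ g, f g = χ g * x - x := by
  have hne : χ g₀ - 1 ≠ 0 := sub_ne_zero.mpr hg₀
  refine ⟨f g₀ / (χ g₀ - 1), fun g => ?_⟩
  have key : f g * (χ g₀ - 1) = f g₀ * (χ g - 1) := by
    linear_combination -(hf g g₀).symm.trans ((hcomm g).eq ▸ hf g₀ g)
  field_simp
  linear_combination key

theorem Subgroup.exists_sq_ne_one_of_two_lt_card {R : Type*} [CommRing R] [IsDomain R]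
    (H : Subgroup Rˣ) (hH : 2 < Nat.card H) : ∃ u ∈ H, u ^ 2 ≠ 1 := by
  by_contra! h
  have hle : H ≤ rootsOfUnity 2 R := fun u hu => (mem_rootsOfUnity 2 u).mpr (h u hu)
  exact (Subgroup.card_le_of_le hle |>.trans (card_rootsOfUnity R 2)).not_gt hH

theorem IsPrimitiveRoot.isCyclotomicExtension_of_adjoin_eq_top {F L : Type*} [Field F] [Field L]
    [Algebra F L] {n : ℕ} [NeZero n] {ξ : L} (hξ : IsPrimitiveRoot ξ n) (hL : F⟮ξ⟯ = ⊤) :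
    IsCyclotomicExtension {n} F L := by
  have hξalg : IsAlgebraic F ξ := ((hξ.isIntegral (NeZero.pos n)).tower_top (A := F)).isAlgebraic
  have hadj : Algebra.adjoin F {ξ} = ⊤ := by
    rw [← adjoin_simple_toSubalgebra_of_isAlgebraic hξalg, hL, top_toSubalgebra]
  have := hξ.adjoin_isCyclotomicExtension F
  exact IsCyclotomicExtension.equiv {n} F _
    ((Subalgebra.equivOfEq _ _ hadj).trans Subalgebra.topEquiv)

theorem IsPrimitiveRoot.exists_algEquiv_apply_eq_pow_sq_ne_one {F L : Type*} [Field F] [Field L]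
    [Algebra F L] [Normal F L] {p : ℕ} [Fact p.Prime] {ζ : L} (hζ : IsPrimitiveRoot ζ p)
    (hdeg : 2 < Module.finrank F F⟮ζ⟯) :
    ∃ g : L ≃ₐ[F] L, ∃ m : ℕ, g ζ = ζ ^ m ∧ (m : ZMod p) ^ 2 ≠ 1 := by
  set E := F⟮ζ⟯
  have hζE : IsPrimitiveRoot (⟨ζ, mem_adjoin_simple_self F ζ⟩ : E) p := by
    rwa [← IsPrimitiveRoot.coe_submonoidClass_iff]
  have := hζ.intermediateField_adjoin_isCyclotomicExtension F
  have := IsCyclotomicExtension.isGalois {p} F E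
  have := IsCyclotomicExtension.finiteDimensional {p} F E
  set ρ := hζE.autToPow F
  have hcard : 2 < Nat.card ρ.range := by
    rwa [MonoidHom.range_eq_map, Subgroup.card_map_of_injective (hζE.autToPow_injective F),
      Subgroup.card_top, IsGalois.card_aut_eq_finrank]
  obtain ⟨_, ⟨σ, rfl⟩, hσ⟩ := ρ.range.exists_sq_ne_one_of_two_lt_card hcard
  obtain ⟨g, rfl⟩ := AlgEquiv.restrictNormalHom_surjective (F := F) (K₁ := E) L σ
  refine ⟨g, (ρ (AlgEquiv.restrictNormalHom E g) : ZMod p).val, ?_, ?_⟩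
  · have hspec := congrArg (algebraMap E L) (hζE.autToPow_spec F (AlgEquiv.restrictNormalHom E g))
    rw [map_pow] at hspec
    exact (hspec.trans (AlgEquiv.restrictNormal_commutes g E _)).symm
  · rw [ZMod.natCast_zmod_val, ← Units.val_pow_eq_pow_val, Ne, Units.val_eq_one]
    exact hσ

theorem h1_of_quadratic_twist_of_cyclotomic_character_vanishes_general
    {F L : Type} [Field F]
    (p N : ℕ) (hp : p.Prime)
    [Field L] [Algebra F L]
    (ξ : L) (hξ : IsPrimitiveRoot ξ (p ^ N))
    (hL : IntermediateField.adjoin F {ξ} = ⊤)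
    (ζ : L) (hζ : IsPrimitiveRoot ζ p)
    (h4 : 4 ∣ Module.finrank F (IntermediateField.adjoin F {ζ}))
    {k : Type} [Field k] [CharP k p]
    (ε : (L ≃ₐ[F] L) →* kˣ)
    (hε : ∀ (g : L ≃ₐ[F] L) (m : ℕ), g ζ = ζ ^ m → ((ε g : kˣ) : k) = (m : k))
    (δ : (L ≃ₐ[F] L) →* kˣ)
    (hδ2 : ∀ g : L ≃ₐ[F] L, ((δ g : kˣ) : k) = 1 ∨ ((δ g : kˣ) : k) = -1) :
    ∀ f : (L ≃ₐ[F] L) → k,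
      (∀ g h : L ≃ₐ[F] L,
        f (g * h) = f g + ((δ g : kˣ) : k) * ((ε g : kˣ) : k) * f h) →
      ∃ x : k, ∀ g : L ≃ₐ[F] L,
        f g = ((δ g : kˣ) : k) * ((ε g : kˣ) : k) * x - x := by
  intro f hf
  have := Fact.mk hp
  have : NeZero (p ^ N) := ⟨pow_ne_zero N hp.ne_zero⟩
  have := hξ.isCyclotomicExtension_of_adjoin_eq_top hL
  have := IsCyclotomicExtension.isAbelianGalois {p ^ N} F L
  have := IsCyclotomicExtension.finiteDimensional {p ^ N} F L
  have hdeg : 2 < Module.finrank F F⟮ζ⟯ := by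
    have := Nat.le_of_dvd Module.finrank_pos h4
    omega
  obtain ⟨g₀, m, hg₀, hm⟩ := hζ.exists_algEquiv_apply_eq_pow_sq_ne_one hdeg
  have hεg₀ : ((ε g₀ : kˣ) : k) ^ 2 ≠ 1 := by
    rw [hε g₀ m hg₀]
    intro h
    exact hm ((ZMod.castHom (dvd_refl p) k).injective (by simpa using h))
  have hδg₀ : ((δ g₀ : kˣ) : k) ^ 2 = 1 := by
    rcases hδ2 g₀ with hd | hd <;> simp [hd]
  have hχg₀ : ((δ g₀ : kˣ) : k) * ((ε g₀ : kˣ) : k) ≠ 1 := by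
    intro h
    apply hεg₀
    linear_combination (((δ g₀ : kˣ) : k) * ((ε g₀ : kˣ) : k) + 1) * h
      - ((ε g₀ : kˣ) : k) ^ 2 * hδg₀
  exact exists_eq_mul_sub_of_commute_of_ne_one (fun g => ((δ g : kˣ) : k) * ((ε g : kˣ) : k)) f
    hf (fun g => Std.Commutative.comm g₀ g) hχg₀

/-- let `F` be a totally real number field and `p` an odd prime with
`4 ∣ [F(ζ_p) : F]`, let `K` be the unique quadratic subfield of `F(ζ_p)/F`, let `N ≥ 1`
and let `L = F(ζ_{p^N})`.  Let `k` be a finite field of characteristic `p`, let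
`ε̄ : Gal(L/F) → kˣ` be the mod-`p` cyclotomic character (describing the action on the
`p`-th roots of unity) and `δ : Gal(L/F) → kˣ` the inflation of the unique order-2
character of `Gal(K/F)`.  Then `H¹(Gal(L/F), k(δ·ε̄)) = 0`: every 1-cocycle of
`Gal(L/F)` valued in `k` with the `δ·ε̄`-twisted action is a coboundary. -/
theorem h1_of_quadratic_twist_of_cyclotomic_character_vanishes
    {F L : Type} [Field F] [NumberField F]
    (htrF : ∀ φ : F →+* ℂ, ∀ x : F, (φ x).im = 0)
    (p N : ℕ) (hp : p.Prime) (hp2 : p ≠ 2) (hN : 1 ≤ N)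
    [Field L] [Algebra F L]
    (ξ : L) (hξ : IsPrimitiveRoot ξ (p ^ N))
    (hL : IntermediateField.adjoin F {ξ} = ⊤)
    (ζ : L) (hζ : IsPrimitiveRoot ζ p)
    (h4 : 4 ∣ Module.finrank F (IntermediateField.adjoin F {ζ}))
    (K : IntermediateField F L) (hK2 : Module.finrank F K = 2)
    (hKζ : K ≤ IntermediateField.adjoin F {ζ})
    {k : Type} [Field k] [Fintype k] [CharP k p]
    (ε : (L ≃ₐ[F] L) →* kˣ)
    (hε : ∀ (g : L ≃ₐ[F] L) (m : ℕ), g ζ = ζ ^ m → ((ε g : kˣ) : k) = (m : k))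
    (δ : (L ≃ₐ[F] L) →* kˣ)
    (hδ1 : ∀ g : L ≃ₐ[F] L, (((δ g : kˣ) : k) = 1 ↔ ∀ x : L, x ∈ K → g x = x))
    (hδ2 : ∀ g : L ≃ₐ[F] L, ((δ g : kˣ) : k) = 1 ∨ ((δ g : kˣ) : k) = -1) :
    ∀ f : (L ≃ₐ[F] L) → k,
      (∀ g h : L ≃ₐ[F] L,
        f (g * h) = f g + ((δ g : kˣ) : k) * ((ε g : kˣ) : k) * f h) →
      ∃ x : k, ∀ g : L ≃ₐ[F] L,
        f g = ((δ g : kˣ) : k) * ((ε g : kˣ) : k) * x - x :=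
  h1_of_quadratic_twist_of_cyclotomic_character_vanishes_general p N hp ξ hξ hL ζ hζ h4 ε hε δ hδ2
end
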